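/- Let U = I_2 ⊗ |1⟩⟨1| + σ_x ⊗ |2⟩⟨2| + σ_y ⊗ |3⟩⟨3| acting on ℂ^2 ⊗ ℂ^3, let |ψ⟩ = (1/√2)(|1⟩_A|1⟩_{A'} + |2⟩_A|2⟩_{A'}) ⊗ (1/√3)(|1⟩+|2⟩+|3⟩)_B, where U acts on the A and B systems. Then the reduced state of U|ψ⟩ on the AA' system (tracing out B) is (1/3) of a rank-3 projector; i.e., U|ψ⟩ is a maximally entangled state of Schmidt rank 3 across the AA'|B cut. -/

import Mathlib

/-!
Reshaped into a `4 × 3` matrix (rows `AA'`, columns `B`), `U|ψ⟩` has as its `b`-th column the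
Pauli matrix `σ_b ∈ {I, σ_x, σ_y}` read as a vector, scaled by `1/√6`. These three matrices
are Hilbert–Schmidt orthogonal with `tr(σ_b† σ_b) = 2`, so `U|ψ⟩ = V/√3` for an isometry `V`,
and the reduced state on `AA'` is `V V† / 3`, where `V V†` is the projector onto the range of
`V`, of rank 3.
-/

open Matrix Kronecker Finset Complex

noncomputable def sX : Matrix (Fin 2) (Fin 2) ℂ := !![0, 1; 1, 0]
noncomputable def sY : Matrix (Fin 2) (Fin 2) ℂ := !![0, -Complex.I; Complex.I, 0]

/-- `U = I₂ ⊗ |1⟩⟨1| + σ_x ⊗ |2⟩⟨2| + σ_y ⊗ |3⟩⟨3|` on `ℂ² ⊗ ℂ³`. -/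
noncomputable def U23 : Matrix (Fin 2 × Fin 3) (Fin 2 × Fin 3) ℂ :=
  (1 : Matrix (Fin 2) (Fin 2) ℂ) ⊗ₖ Matrix.single (0 : Fin 3) (0 : Fin 3) (1 : ℂ)
  + sX ⊗ₖ Matrix.single (1 : Fin 3) (1 : Fin 3) (1 : ℂ)
  + sY ⊗ₖ Matrix.single (2 : Fin 3) (2 : Fin 3) (1 : ℂ)

/-- `U` acting on systems `A` and `B`, extended by the identity on the ancilla `A'`.
Index ordering: `((a, a'), b)`. -/
noncomputable def Ufull : Matrix ((Fin 2 × Fin 2) × Fin 3) ((Fin 2 × Fin 2) × Fin 3) ℂ :=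
  Matrix.of fun x y =>
    (if x.1.2 = y.1.2 then (1 : ℂ) else 0) * U23 (x.1.1, x.2) (y.1.1, y.2)

/-- The product state `(1/√2)(|11⟩+|22⟩)_{AA'} ⊗ (1/√3)(|1⟩+|2⟩+|3⟩)_B`. -/
noncomputable def psi : (Fin 2 × Fin 2) × Fin 3 → ℂ :=
  fun x => (if x.1.1 = x.1.2 then ((Real.sqrt 2 : ℂ))⁻¹ else 0) * ((Real.sqrt 3 : ℂ))⁻¹

namespace Matrix

variable {m n k R : Type*}

lemma of_sum_mul_star_eq_mul_conjTranspose [Fintype n] [CommSemiring R] [StarRing R]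
    (ψ : m × n → R) :
    (of fun v w => ∑ b, ψ (v, b) * star (ψ (w, b))) =
      of (Function.curry ψ) * (of (Function.curry ψ))ᴴ := by
  ext v w
  simp [mul_apply]

lemma smul_mul_conjTranspose_smul [Fintype n] [CommSemiring R] [StarRing R] (c : R)
    (A : Matrix m n R) :
    (c • A) * (c • A)ᴴ = (star c * c) • (A * Aᴴ) := by
  rw [conjTranspose_smul, Matrix.mul_smul, Matrix.smul_mul, smul_smul, mul_comm]

lemma conjTranspose_smul_mul_smul [Fintype m] [CommSemiring R] [StarRing R] (c : R)
    (A : Matrix m n R) :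
    (c • A)ᴴ * (c • A) = (star c * c) • (Aᴴ * A) := by
  rw [conjTranspose_smul, Matrix.smul_mul, Matrix.mul_smul, smul_smul]

lemma isIdempotentElem_mul_conjTranspose_self [Fintype m] [Fintype k] [CommSemiring R]
    [StarRing R] [DecidableEq k] {V : Matrix m k R} (hV : Vᴴ * V = 1) :
    IsIdempotentElem (V * Vᴴ) := by
  rw [IsIdempotentElem, Matrix.mul_assoc, ← Matrix.mul_assoc Vᴴ, hV, Matrix.one_mul]

lemma rank_mul_conjTranspose_self_of_conjTranspose_mul_self_eq_one [Fintype m] [Fintype k]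
    [Field R] [PartialOrder R] [StarRing R] [StarOrderedRing R] [DecidableEq k]
    {V : Matrix m k R} (hV : Vᴴ * V = 1) :
    (V * Vᴴ).rank = Fintype.card k := by
  rw [rank_self_mul_conjTranspose, ← rank_conjTranspose_mul_self, hV, rank_one]

end Matrix

lemma Complex.star_inv_ofReal_sqrt_mul_self {x : ℝ} (hx : 0 ≤ x) :
    star ((√x : ℂ))⁻¹ * ((√x : ℂ))⁻¹ = (x : ℂ)⁻¹ := by
  rw [star_inv₀, Complex.star_def, Complex.conj_ofReal, ← mul_inv, ← Complex.ofReal_mul,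
    Real.mul_self_sqrt hx]

noncomputable def pauliFrame : Matrix (Fin 2 × Fin 2) (Fin 3) ℂ :=
  ((√2 : ℂ))⁻¹ • of fun v b => ![1, sX, sY] b v.1 v.2

lemma pauliFrame_conjTranspose_mul_self : pauliFrameᴴ * pauliFrame = 1 := by
  rw [pauliFrame, conjTranspose_smul_mul_smul, Complex.star_inv_ofReal_sqrt_mul_self zero_le_two]
  ext b c
  fin_cases b <;> fin_cases c <;>
    simp [sX, sY, mul_apply, Fintype.sum_prod_type, Fin.sum_univ_succ, one_apply] <;> norm_num

lemma curry_Ufull_mulVec_psi :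
    of (Function.curry (Ufull *ᵥ psi)) = ((√3 : ℂ))⁻¹ • pauliFrame := by
  ext ⟨a, a'⟩ b
  fin_cases a <;> fin_cases a' <;> fin_cases b <;>
    simp [Ufull, U23, psi, pauliFrame, sX, sY, mulVec, dotProduct, Fintype.sum_prod_type,
      one_apply, single, kroneckerMap_apply] <;> ring

open ComplexOrder in
theorem stmt_19 :
    ∃ P : Matrix (Fin 2 × Fin 2) (Fin 2 × Fin 2) ℂ,
      Pᴴ = P ∧ P * P = P ∧ P.rank = 3 ∧
      (Matrix.of fun v w : Fin 2 × Fin 2 =>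
          ∑ b : Fin 3, (Ufull.mulVec psi) (v, b) * star ((Ufull.mulVec psi) (w, b)))
        = ((3 : ℂ))⁻¹ • P := by
  refine ⟨pauliFrame * pauliFrameᴴ, isHermitian_mul_conjTranspose_self _,
    isIdempotentElem_mul_conjTranspose_self pauliFrame_conjTranspose_mul_self,
    rank_mul_conjTranspose_self_of_conjTranspose_mul_self_eq_one
      pauliFrame_conjTranspose_mul_self, ?_⟩
  rw [of_sum_mul_star_eq_mul_conjTranspose, curry_Ufull_mulVec_psi,
    smul_mul_conjTranspose_smul, Complex.star_inv_ofReal_sqrt_mul_self zero_le_three]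
  norm_num
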